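/- (Dual-weighted-residual estimate of an error generalized coordinate with explicit second-order remainder.) Let r : ℝ^N → ℝ^N be differentiable on an open convex set U ⊆ ℝ^N with derivative Lipschitz of constant M on U. Let w_ROM ∈ U with J := Dr(w_ROM) invertible, let w ∈ U satisfy r(w) = 0, and set δ := w − w_ROM. Let Θ be an N×N symmetric positive-definite matrix, Φ an N×n matrix of full column rank, and G := (ΦᵀΘΦ)⁻¹ΦᵀΘ. For a fixed index i, let the dual p ∈ ℝ^N solve Jᵀ p = −Gᵀ e_i, where e_i is the i-th canonical unit vector of ℝ^n. Then the dual-weighted residual pᵀ r(w_ROM) approximates the i-th error generalized coordinate (Gδ)_i to second order: |(Gδ)_i − pᵀ r(w_ROM)| ≤ ‖p‖ · (M/2) · ‖δ‖². -/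

import Mathlib

/-!
Since `r w = 0`, the Taylor remainder `R := r w - r w_ROM - J δ` is `-r w_ROM - J δ`, and the dual
equation turns `pᵀ J δ` into `-(G δ)_i`; hence `(G δ)_i - pᵀ r(w_ROM) = pᵀ R`. Cauchy–Schwarz
and the second-order bound `‖R‖ ≤ (M/2) ‖δ‖²` for a map with `M`-Lipschitz derivative finish.
-/

open Matrix NNReal

section TaylorRemainder

variable {E F : Type*} [NormedAddCommGroup E] [NormedSpace ℝ E]
  [NormedAddCommGroup F] [NormedSpace ℝ F]
  {f : E → F} {f' : E → E →L[ℝ] F} {U : Set E} {K : ℝ≥0}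

theorem norm_apply_sub_apply_le_of_lipschitzOnWith (hlip : LipschitzOnWith K f' U)
    {x z : E} (hx : x ∈ U) (hz : z ∈ U) (v : E) :
    ‖f' z v - f' x v‖ ≤ K * ‖z - x‖ * ‖v‖ := by
  rw [← _root_.sub_apply]
  calc ‖(f' z - f' x) v‖ ≤ ‖f' z - f' x‖ * ‖v‖ := (f' z - f' x).le_opNorm v
    _ ≤ K * ‖z - x‖ * ‖v‖ := by
        gcongr
        simpa only [dist_eq_norm] using hlip.dist_le_mul z hz x hx

theorem norm_sub_sub_fderiv_le_of_lipschitzOnWith (hU : Convex ℝ U)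
    (hf : ∀ z ∈ U, HasFDerivAt f (f' z) z) (hlip : LipschitzOnWith K f' U)
    {x y : E} (hx : x ∈ U) (hy : y ∈ U) :
    ‖f y - f x - f' x (y - x)‖ ≤ K / 2 * ‖y - x‖ ^ 2 := by
  set d := y - x
  have hmem : ∀ t ∈ Set.Icc (0 : ℝ) 1, x + t • d ∈ U := fun t ht => hU.add_smul_sub_mem hx hy ht
  let g : ℝ → F := fun t => f (x + t • d) - f x - t • f' x d
  have hg : ∀ t ∈ Set.Icc (0 : ℝ) 1, HasDerivAt g (f' (x + t • d) d - f' x d) t := by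
    intro t ht
    have hline : HasDerivAt (fun t : ℝ => x + t • d) d t := by
      simpa using ((hasDerivAt_id t).smul_const d).const_add x
    exact (((hf _ (hmem t ht)).comp_hasDerivAt t hline).sub_const (f x)).sub
      (by simpa using (hasDerivAt_id t).smul_const (f' x d))
  have hB : ∀ t : ℝ, HasDerivAt (fun t => K / 2 * ‖d‖ ^ 2 * t ^ 2) (K * ‖d‖ ^ 2 * t) t := by
    intro t
    refine ((hasDerivAt_pow 2 t).const_mul (K / 2 * ‖d‖ ^ 2)).congr_deriv ?_
    norm_num
    ring
  have hg' : ∀ t ∈ Set.Ico (0 : ℝ) 1, ‖f' (x + t • d) d - f' x d‖ ≤ K * ‖d‖ ^ 2 * t := by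
    intro t ht
    calc ‖f' (x + t • d) d - f' x d‖ ≤ K * ‖x + t • d - x‖ * ‖d‖ :=
          norm_apply_sub_apply_le_of_lipschitzOnWith hlip hx (hmem t (Set.mem_Icc_of_Ico ht)) d
      _ = K * ‖d‖ ^ 2 * t := by
          rw [add_sub_cancel_left, norm_smul, Real.norm_of_nonneg ht.1]
          ring
  have hbound := image_norm_le_of_norm_deriv_right_le_deriv_boundary
    (fun t ht => (hg t ht).continuousAt.continuousWithinAt)
    (fun t ht => (hg t (Set.mem_Icc_of_Ico ht)).hasDerivWithinAt)
    (by simp [g]) hB hg' (Set.right_mem_Icc.2 zero_le_one)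
  simpa [g, d] using hbound

end TaylorRemainder

theorem EuclideanSpace.abs_dotProduct_le {ι : Type*} [Fintype ι] (p q : EuclideanSpace ℝ ι) :
    |p.ofLp ⬝ᵥ q.ofLp| ≤ ‖p‖ * ‖q‖ := by
  simpa [EuclideanSpace.inner_eq_star_dotProduct, dotProduct_comm] using abs_real_inner_le_norm p q

theorem dotProduct_mulVec_eq_neg_apply_of_transpose_mulVec_eq {l m k R : Type*}
    [Fintype l] [Fintype m] [Fintype k] [DecidableEq k] [CommRing R]
    {J : Matrix m l R} {G : Matrix k l R} {p : m → R} {i : k}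
    (hp : Jᵀ *ᵥ p = -(Gᵀ *ᵥ Pi.single i 1)) (v : l → R) :
    p ⬝ᵥ J *ᵥ v = -(G *ᵥ v) i := by
  rw [dotProduct_mulVec, ← mulVec_transpose, hp, neg_dotProduct, mulVec_transpose,
    ← dotProduct_mulVec, single_dotProduct, one_mul]

theorem stmt16_general (N n : ℕ)
    (r : EuclideanSpace ℝ (Fin N) → EuclideanSpace ℝ (Fin N))
    (U : Set (EuclideanSpace ℝ (Fin N))) (hUc : Convex ℝ U)
    (f' : EuclideanSpace ℝ (Fin N) → (EuclideanSpace ℝ (Fin N) →L[ℝ] EuclideanSpace ℝ (Fin N)))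
    (hderiv : ∀ x ∈ U, HasFDerivAt r (f' x) x)
    (M : ℝ) (hM : 0 ≤ M) (hlip : LipschitzOnWith M.toNNReal f' U)
    (wROM : EuclideanSpace ℝ (Fin N)) (hwROM : wROM ∈ U)
    (J : Matrix (Fin N) (Fin N) ℝ)
    (hJ : ∀ v : EuclideanSpace ℝ (Fin N), (f' wROM v : Fin N → ℝ) = J.mulVec v)
    (w : EuclideanSpace ℝ (Fin N)) (hw : w ∈ U) (hres : r w = 0)
    (G : Matrix (Fin n) (Fin N) ℝ)
    (i : Fin n) (p : EuclideanSpace ℝ (Fin N))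
    (hp : Jᵀ.mulVec p = -(Gᵀ.mulVec (Pi.single i 1))) :
    |G.mulVec (w - wROM) i - (p : Fin N → ℝ) ⬝ᵥ (r wROM : Fin N → ℝ)| ≤
      ‖p‖ * (M / 2) * ‖w - wROM‖ ^ 2 := by
  have htaylor := norm_sub_sub_fderiv_le_of_lipschitzOnWith hUc hderiv hlip hwROM hw
  rw [hres, Real.coe_toNNReal M hM] at htaylor
  have hdual := dotProduct_mulVec_eq_neg_apply_of_transpose_mulVec_eq hp (w - wROM).ofLp
  rw [← hJ] at hdual
  have hsplit : G.mulVec (w - wROM) i - p.ofLp ⬝ᵥ (r wROM).ofLp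
      = p.ofLp ⬝ᵥ (0 - r wROM - f' wROM (w - wROM)).ofLp := by
    simp only [WithLp.ofLp_sub, WithLp.ofLp_zero, dotProduct_sub, dotProduct_zero, hdual]
    ring
  rw [hsplit]
  calc _ ≤ ‖p‖ * ‖0 - r wROM - f' wROM (w - wROM)‖ := EuclideanSpace.abs_dotProduct_le _ _
    _ ≤ ‖p‖ * (M / 2 * ‖w - wROM‖ ^ 2) := by gcongr
    _ = ‖p‖ * (M / 2) * ‖w - wROM‖ ^ 2 := by ring

/-- Dual-weighted-residual estimate of an error generalized coordinate with explicit
second-order remainder: if the residual `r` is differentiable with `M`-Lipschitz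
derivative on an open convex set `U`, `J` is the (invertible) Jacobian at `w_ROM`,
`r w = 0`, `G := (Φᵀ Θ Φ)⁻¹ Φᵀ Θ`, and the dual `p` solves `Jᵀ p = -Gᵀ e_i`, then
`|(G δ)_i - pᵀ r(w_ROM)| ≤ ‖p‖ (M/2) ‖δ‖²` with `δ := w - w_ROM` (Euclidean norms). -/
theorem stmt16 (N n : ℕ) (hn : n ≤ N)
    (r : EuclideanSpace ℝ (Fin N) → EuclideanSpace ℝ (Fin N))
    (U : Set (EuclideanSpace ℝ (Fin N))) (hUo : IsOpen U) (hUc : Convex ℝ U)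
    (f' : EuclideanSpace ℝ (Fin N) → (EuclideanSpace ℝ (Fin N) →L[ℝ] EuclideanSpace ℝ (Fin N)))
    (hderiv : ∀ x ∈ U, HasFDerivAt r (f' x) x)
    (M : ℝ) (hM : 0 ≤ M) (hlip : LipschitzOnWith M.toNNReal f' U)
    (wROM : EuclideanSpace ℝ (Fin N)) (hwROM : wROM ∈ U)
    (J : Matrix (Fin N) (Fin N) ℝ)
    (hJ : ∀ v : EuclideanSpace ℝ (Fin N), (f' wROM v : Fin N → ℝ) = J.mulVec v)
    (hJunit : IsUnit J.det)
    (w : EuclideanSpace ℝ (Fin N)) (hw : w ∈ U) (hres : r w = 0)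
    (Θ : Matrix (Fin N) (Fin N) ℝ) (hΘ : Θ.PosDef)
    (Φ : Matrix (Fin N) (Fin n) ℝ) (hΦ : Φ.rank = n)
    (G : Matrix (Fin n) (Fin N) ℝ) (hG : G = (Φᵀ * Θ * Φ)⁻¹ * Φᵀ * Θ)
    (i : Fin n) (p : EuclideanSpace ℝ (Fin N))
    (hp : Jᵀ.mulVec p = -(Gᵀ.mulVec (Pi.single i 1))) :
    |G.mulVec (w - wROM) i - (p : Fin N → ℝ) ⬝ᵥ (r wROM : Fin N → ℝ)| ≤
      ‖p‖ * (M / 2) * ‖w - wROM‖ ^ 2 :=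
  stmt16_general N n r U hUc f' hderiv M hM hlip wROM hwROM J hJ w hw hres G i p hp
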